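/- Suppose ρ is normalized Lipschitz and each filter coefficient t ↦ h_{fgk}^{(ℓ,t)} is continuous on [0,T]. Let W : I² → ℝ be measurable with |W| ≤ 1, Z ∈ L^∞(I;ℝ^F), and let X be the solution on [0,T] of the Graphon-NDE with kernel W and initial datum Z. For each n, let Wₙ : I² → ℝ be measurable with |Wₙ| ≤ 1, Zₙ ∈ L^∞(I;ℝ^F), and let Xₙ solve the Graphon-NDE with kernel Wₙ, initial datum Zₙ and the same filters. If ‖T_{Wₙ} − T_W‖_{L²(I)→L²(I)} → 0 and ‖Zₙ − Z‖_{L²(I;ℝ^F)} → 0 as n → ∞, then for every T > 0, sup_{t∈[0,T]} ‖Xₙ(t) − X(t)‖_{L²(I;ℝ^F)} → 0 as n → ∞. -/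

import Mathlib

open MeasureTheory Filter Set
open scoped ENNReal NNReal

noncomputable section

/-- Lebesgue measure restricted to the unit interval `I = [0,1]`. -/
def μI : Measure ℝ := volume.restrict (Set.Icc (0:ℝ) 1)

/-- Lebesgue measure restricted to the unit square `I² = [0,1]²`. -/
def μI2 : Measure (ℝ × ℝ) := volume.restrict ((Set.Icc (0:ℝ) 1) ×ˢ (Set.Icc (0:ℝ) 1))

/-- The graphon integral operator `(T_W x)(v) = ∫_I W(u,v) x(u) du`. -/
def graphonOp (W : ℝ → ℝ → ℝ) (x : ℝ → ℝ) : ℝ → ℝ :=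
  fun v => ∫ u in Set.Icc (0:ℝ) 1, W u v * x u

/-- `k`-fold composition `T_W^k` (identity for `k = 0`). -/
def graphonIter (W : ℝ → ℝ → ℝ) (k : ℕ) (x : ℝ → ℝ) : ℝ → ℝ :=
  (graphonOp W)^[k] x

/-- `ρ` is normalized Lipschitz: `|ρ x − ρ y| ≤ |x − y|` and `ρ 0 = 0`. -/
def NormalizedLipschitz (ρ : ℝ → ℝ) : Prop :=
  (∀ x y : ℝ, |ρ x - ρ y| ≤ |x - y|) ∧ ρ 0 = 0

/-- One layer of a graphon neural network. -/
def gnnLayer (F K : ℕ) (W : ℝ → ℝ → ℝ) (ρ : ℝ → ℝ)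
    (h : Fin F → Fin F → Fin K → ℝ) (X : Fin F → ℝ → ℝ) : Fin F → ℝ → ℝ :=
  fun f u => ρ (∑ g : Fin F, ∑ k : Fin K, h f g k * graphonIter W (k : ℕ) (X g) u)

/-- The `L`-layer graphon neural network `Φ(W; X; h)`. -/
def gnn (F K L : ℕ) (W : ℝ → ℝ → ℝ) (ρ : ℝ → ℝ)
    (h : Fin L → Fin F → Fin F → Fin K → ℝ) (X : Fin F → ℝ → ℝ) : Fin F → ℝ → ℝ :=
  (List.ofFn h).foldl (fun Y hl => gnnLayer F K W ρ hl Y) X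

/-- The mixed norm `‖X‖_{L^p(I;ℝ^F)} = (∑_f ‖X_f‖_{L^p(I)}²)^{1/2}`. -/
def vecLpNorm (F : ℕ) (p : ℝ≥0∞) (X : Fin F → ℝ → ℝ) : ℝ :=
  Real.sqrt (∑ f : Fin F, ((eLpNorm (X f) p μI).toReal) ^ 2)

/-- `X : ℝ → L^∞(I;ℝ^F)` is, on `[0,T]`, a continuously differentiable solution of the
Graphon-NDE `dX/dt(t) = Φ(W; X(t); H(t))`, `X(0) = Z`, in the Banach space `L^∞(I;ℝ^F)`. -/
def IsGNDESolution (F K L : ℕ) (T : ℝ) (W : ℝ → ℝ → ℝ) (ρ : ℝ → ℝ)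
    (H : ℝ → Fin L → Fin F → Fin F → Fin K → ℝ) (Z : Fin F → ℝ → ℝ)
    (X : ℝ → Fin F → Lp ℝ ⊤ μI) : Prop :=
  (∀ f, (X 0 f : ℝ → ℝ) =ᵐ[μI] Z f) ∧
  ∃ X' : ℝ → Fin F → Lp ℝ ⊤ μI,
    ContinuousOn X' (Set.Icc 0 T) ∧
    ∀ t ∈ Set.Icc (0:ℝ) T,
      HasDerivWithinAt X (X' t) (Set.Icc 0 T) t ∧
      ∀ f, (X' t f : ℝ → ℝ) =ᵐ[μI]
        gnn F K L W ρ (H t) (fun g => (X t g : ℝ → ℝ)) f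

/-- Operator norm (from `L²(I)` to `L²(I)`) of the difference `T_W − T_{W'}`. -/
def graphonOpNormSub (W W' : ℝ → ℝ → ℝ) : ℝ :=
  ⨆ x : {x : ℝ → ℝ // MemLp x 2 μI ∧ eLpNorm x 2 μI ≤ 1},
    (eLpNorm (fun v => graphonOp W x v - graphonOp W' x v) 2 μI).toReal

/-- Left endpoint `u_i = (i−1)/n` of the cell `I_i` containing `u`. -/
def stepPt (n : ℕ) (u : ℝ) : ℝ := (⌊(n : ℝ) * u⌋ : ℝ) / n

/-- Sampled step kernel: `Wₙ(u,v) = W(u_i,u_j)` for `(u,v) ∈ I_i × I_j`. -/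
def sampKernel (W : ℝ → ℝ → ℝ) (n : ℕ) : ℝ → ℝ → ℝ :=
  fun u v => W (stepPt n u) (stepPt n v)

/-- Sampled step datum: `Zₙ(u) = Z(u_i)` for `u ∈ I_i`. -/
def sampDatum (F : ℕ) (Z : Fin F → ℝ → ℝ) (n : ℕ) : Fin F → ℝ → ℝ :=
  fun f u => Z f (stepPt n u)

/-- Support `W⁺ = {(u,v) ∈ I² : W(u,v) = 1}`. -/
def supportSet (W : ℝ → ℝ → ℝ) : Set (ℝ × ℝ) :=
  {p : ℝ × ℝ | p.1 ∈ Set.Icc (0:ℝ) 1 ∧ p.2 ∈ Set.Icc (0:ℝ) 1 ∧ W p.1 p.2 = 1}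

/-- The cell `I_i = [u_i, u_i + 1/n)` containing `u`. -/
def cell (n : ℕ) (u : ℝ) : Set ℝ := Set.Ico (stepPt n u) (stepPt n u + 1 / n)

open scoped Classical in
/-- Cell-intersection step kernel: `Wₙ = 1` on `I_i × I_j` iff `(I_i × I_j) ∩ W⁺ ≠ ∅`. -/
def interKernel (W : ℝ → ℝ → ℝ) (n : ℕ) : ℝ → ℝ → ℝ :=
  fun u v => if ((cell n u ×ˢ cell n v) ∩ supportSet W).Nonempty then 1 else 0

/-- Cell-average step datum: `Zₙ(u) = n ∫_{I_i} Z(v) dv` for `u ∈ I_i`. -/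
def cellAvg (F : ℕ) (Z : Fin F → ℝ → ℝ) (n : ℕ) : Fin F → ℝ → ℝ :=
  fun f u => (n : ℝ) * ∫ v in cell n u, Z f v

/-- Number of closed `δ`-mesh squares `[iδ,(i+1)δ] × [jδ,(j+1)δ]`, `i,j ∈ ℤ`, meeting `Ω`. -/
def meshCount (δ : ℝ) (Ω : Set (ℝ × ℝ)) : ℕ :=
  Set.ncard {p : ℤ × ℤ |
    ((Set.Icc ((p.1 : ℝ) * δ) (((p.1 : ℝ) + 1) * δ) ×ˢ
      Set.Icc ((p.2 : ℝ) * δ) (((p.2 : ℝ) + 1) * δ)) ∩ Ω).Nonempty}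

/-- Upper box-counting dimension `limsup_{δ→0⁺} log N_δ(Ω) / (−log δ)`. -/
def upperBoxDim (Ω : Set (ℝ × ℝ)) : ℝ :=
  Filter.limsup (fun δ : ℝ => Real.log (meshCount δ Ω) / (-Real.log δ))
    (nhdsWithin 0 (Set.Ioi 0))

end

/-! Realise `T_W` as a contraction `graphonL2` of `L²(I)` and `ρ` as a 1-Lipschitz map of `L²(I)`.
On `L²(I)^F` the network vector field `X ↦ Φ(W; X; H(t))` is then Lipschitz, with a constant
depending only on a bound `M` for the filters on `[0,T]`, and replacing `W` by `Wₙ` moves it by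
at most a constant times `‖T_{Wₙ} − T_W‖ ‖X‖`, since `‖Aᵏ − Bᵏ‖ ≤ k ‖A − B‖` for contractions.
So `X` is an approximate solution of the `Wₙ`-equation, and Grönwall's inequality bounds
`‖Xₙ(t) − X(t)‖` on `[0,T]` by a quantity that vanishes with `‖Zₙ − Z‖` and `‖T_{Wₙ} − T_W‖`. -/

namespace ContinuousLinearMap

variable {𝕜 E : Type*} [NontriviallyNormedField 𝕜] [SeminormedAddCommGroup E] [NormedSpace 𝕜 E]

theorem norm_pow_le_one {T : E →L[𝕜] E} (hT : ‖T‖ ≤ 1) : ∀ n : ℕ, ‖T ^ n‖ ≤ 1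
  | 0 => norm_id_le
  | n + 1 => by
    rw [pow_succ']
    exact (norm_mul_le _ _).trans (mul_le_one₀ hT (norm_nonneg _) (norm_pow_le_one hT n))

theorem norm_pow_sub_pow_le {S T : E →L[𝕜] E} (hS : ‖S‖ ≤ 1) (hT : ‖T‖ ≤ 1) (n : ℕ) :
    ‖S ^ n - T ^ n‖ ≤ n * ‖S - T‖ := by
  induction n with
  | zero => simp
  | succ n ih =>
    have hsplit : S ^ (n + 1) - T ^ (n + 1) = S * (S ^ n - T ^ n) + (S - T) * T ^ n := by
      rw [pow_succ', pow_succ']; noncomm_ring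
    calc ‖S ^ (n + 1) - T ^ (n + 1)‖
        ≤ ‖S‖ * ‖S ^ n - T ^ n‖ + ‖S - T‖ * ‖T ^ n‖ := by
          rw [hsplit]; exact norm_add_le_of_le (norm_mul_le _ _) (norm_mul_le _ _)
      _ ≤ 1 * (n * ‖S - T‖) + ‖S - T‖ * 1 := by
          gcongr
          exact norm_pow_le_one hT n
      _ = (n + 1 : ℕ) * ‖S - T‖ := by push_cast; ring

end ContinuousLinearMap

section Foldl

variable {ι E : Type*}

theorem LipschitzWith.list_foldl [PseudoEMetricSpace E] {Φ : ι → E → E} {B : ℝ≥0} {l : List ι}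
    (hΦ : ∀ i ∈ l, LipschitzWith B (Φ i)) :
    LipschitzWith (B ^ l.length) (fun x => l.foldl (fun y i => Φ i y) x) := by
  induction l with
  | nil => exact LipschitzWith.id
  | cons i l ih =>
    rw [List.forall_mem_cons] at hΦ
    rw [List.length_cons, pow_succ]
    exact (ih hΦ.2).comp hΦ.1

theorem dist_list_foldl_le [SeminormedAddCommGroup E] {Φ Ψ : ι → E → E} {B : ℝ≥0} {δ : ℝ}
    {l : List ι} (hB : 1 ≤ B) (hδ : 0 ≤ δ) (hΦ : ∀ i ∈ l, LipschitzWith B (Φ i))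
    (hΦ0 : ∀ i ∈ l, Φ i 0 = 0) (hΨ : ∀ i ∈ l, LipschitzWith B (Ψ i))
    (hΨΦ : ∀ i ∈ l, ∀ x, dist (Ψ i x) (Φ i x) ≤ δ * ‖x‖) (x y : E) :
    dist (l.foldl (fun z i => Ψ i z) y) (l.foldl (fun z i => Φ i z) x)
      ≤ B ^ l.length * (dist y x + l.length * δ * ‖x‖) := by
  induction l generalizing x y with
  | nil => simp
  | cons i l ih =>
    simp only [List.forall_mem_cons] at hΦ hΦ0 hΨ hΨΦ
    have hstep : dist (Ψ i y) (Φ i x) ≤ B * dist y x + δ * ‖x‖ :=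
      (dist_triangle _ (Ψ i x) _).trans (add_le_add (hΨ.1.dist_le_mul y x) (hΨΦ.1 x))
    have hgrowth : ‖Φ i x‖ ≤ B * ‖x‖ := by
      simpa [hΦ0.1] using hΦ.1.dist_le_mul x 0
    have hδx : δ * ‖x‖ ≤ B * (δ * ‖x‖) :=
      le_mul_of_one_le_left (by positivity) (by exact_mod_cast hB)
    calc dist (l.foldl (fun z i => Ψ i z) (Ψ i y)) (l.foldl (fun z i => Φ i z) (Φ i x))
        ≤ B ^ l.length * (dist (Ψ i y) (Φ i x) + l.length * δ * ‖Φ i x‖) :=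
          ih hΦ.2 hΦ0.2 hΨ.2 hΨΦ.2 _ _
      _ ≤ B ^ l.length * ((B * dist y x + B * (δ * ‖x‖)) + l.length * δ * (B * ‖x‖)) := by
          gcongr
          linarith
      _ = B ^ (i :: l).length * (dist y x + (i :: l).length * δ * ‖x‖) := by
          simp only [List.length_cons, Nat.cast_succ, pow_succ]; ring

end Foldl

theorem tendsto_gronwallBound_zero {ι : Type*} {l : Filter ι} {δ ε : ι → ℝ}
    (hδ : Tendsto δ l (nhds 0)) (hε : Tendsto ε l (nhds 0)) (K x : ℝ) :
    Tendsto (fun i => gronwallBound (δ i) K (ε i) x) l (nhds 0) := by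
  have hcont : Continuous fun p : ℝ × ℝ => gronwallBound p.1 K p.2 x := by
    unfold gronwallBound; split_ifs <;> fun_prop
  simpa only [Function.comp_def, gronwallBound_ε0_δ0] using
    (hcont.tendsto (0, 0)).comp (hδ.prodMk_nhds hε)


theorem exists_abs_coeff_le {F K L : ℕ} {s : Set ℝ} (hs : IsCompact s)
    {H : ℝ → Fin L → Fin F → Fin F → Fin K → ℝ}
    (hH : ∀ ℓ f g k, ContinuousOn (fun t => H t ℓ f g k) s) :
    ∃ M : ℝ≥0, ∀ t ∈ s, ∀ ℓ f g k, |H t ℓ f g k| ≤ M := by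
  obtain ⟨C, hC⟩ := hs.exists_bound_of_continuousOn (f := H) <| continuousOn_pi.2 fun ℓ =>
    continuousOn_pi.2 fun f => continuousOn_pi.2 fun g => continuousOn_pi.2 fun k => hH ℓ f g k
  refine ⟨C.toNNReal, fun t ht ℓ f g k => ?_⟩
  calc |H t ℓ f g k| ≤ ‖H t‖ := ((((norm_le_pi_norm (H t ℓ f g) k).trans
        (norm_le_pi_norm (H t ℓ f) g)).trans (norm_le_pi_norm (H t ℓ) f)).trans
        (norm_le_pi_norm (H t) ℓ))
    _ ≤ C.toNNReal := (hC t ht).trans (Real.le_coe_toNNReal C)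

section OperatorNetwork

variable {E : Type*} [NormedAddCommGroup E] [NormedSpace ℝ E] {F K L : ℕ}

/-- `gnnLayer` and `gnn` with the shift operator `T_W` replaced by any `T` and the pointwise
activation by any `σ : E → E`. -/
def opLayer (T : E →L[ℝ] E) (σ : E → E) (h : Fin F → Fin F → Fin K → ℝ) (X : Fin F → E) :
    Fin F → E :=
  fun f => σ (∑ g, ∑ k : Fin K, h f g k • (T ^ (k : ℕ)) (X g))

def opNetwork (T : E →L[ℝ] E) (σ : E → E) (h : Fin L → Fin F → Fin F → Fin K → ℝ)
    (X : Fin F → E) : Fin F → E :=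
  (List.ofFn h).foldl (fun Y hl => opLayer T σ hl Y) X

theorem norm_sum_sum_smul_le {h : Fin F → Fin F → Fin K → ℝ} {M : ℝ≥0}
    (hM : ∀ f g k, |h f g k| ≤ M) {v : Fin F → Fin K → E} {c : ℝ} (hv : ∀ g k, ‖v g k‖ ≤ c)
    (f : Fin F) : ‖∑ g, ∑ k, h f g k • v g k‖ ≤ F * K * M * c := by
  calc ‖∑ g, ∑ k, h f g k • v g k‖ ≤ ∑ g, ∑ k, ‖h f g k • v g k‖ :=
        (norm_sum_le _ _).trans (Finset.sum_le_sum fun g _ => norm_sum_le _ _)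
    _ ≤ ∑ _g : Fin F, ∑ _k : Fin K, (M : ℝ) * c := by
        gcongr with g _ k _
        rw [norm_smul, Real.norm_eq_abs]
        exact mul_le_mul (hM f g k) (hv g k) (norm_nonneg _) M.2
    _ = F * K * M * c := by simp; ring

variable {T T' : E →L[ℝ] E} {σ : E → E} {h : Fin F → Fin F → Fin K → ℝ} {M : ℝ≥0}

theorem opLayer_zero (hσ0 : σ 0 = 0) : opLayer T σ h 0 = 0 := by
  funext f; simp [opLayer, hσ0]

theorem lipschitzWith_opLayer (hT : ‖T‖ ≤ 1) (hσ : LipschitzWith 1 σ)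
    (hM : ∀ f g k, |h f g k| ≤ M) : LipschitzWith (F * K * M) (opLayer T σ h) := by
  refine LipschitzWith.of_dist_le_mul fun X Y => (dist_pi_le_iff (by positivity)).2 fun f => ?_
  refine (hσ.dist_le_mul _ _).trans ?_
  have hsub : (∑ g, ∑ k : Fin K, h f g k • (T ^ (k : ℕ)) (X g))
      - ∑ g, ∑ k : Fin K, h f g k • (T ^ (k : ℕ)) (Y g)
      = ∑ g, ∑ k : Fin K, h f g k • (T ^ (k : ℕ)) (X g - Y g) := by
    simp only [map_sub, smul_sub, Finset.sum_sub_distrib]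
  rw [NNReal.coe_one, one_mul, dist_eq_norm, hsub]
  simp only [NNReal.coe_mul, NNReal.coe_natCast]
  refine norm_sum_sum_smul_le hM (fun g k => ?_) f
  calc ‖(T ^ (k : ℕ)) (X g - Y g)‖ ≤ 1 * ‖X g - Y g‖ :=
        (T ^ (k : ℕ)).le_of_opNorm_le (T.norm_pow_le_one hT k) _
    _ ≤ dist X Y := by rw [one_mul, ← dist_eq_norm]; exact dist_le_pi_dist X Y g

theorem dist_opLayer_opLayer_le (hT : ‖T‖ ≤ 1) (hT' : ‖T'‖ ≤ 1) (hσ : LipschitzWith 1 σ)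
    (hM : ∀ f g k, |h f g k| ≤ M) (X : Fin F → E) :
    dist (opLayer T' σ h X) (opLayer T σ h X) ≤ F * K * M * (K * ‖T' - T‖) * ‖X‖ := by
  refine (dist_pi_le_iff (by positivity)).2 fun f => (hσ.dist_le_mul _ _).trans ?_
  have hsub : (∑ g, ∑ k : Fin K, h f g k • (T' ^ (k : ℕ)) (X g))
      - ∑ g, ∑ k : Fin K, h f g k • (T ^ (k : ℕ)) (X g)
      = ∑ g, ∑ k : Fin K, h f g k • (T' ^ (k : ℕ) - T ^ (k : ℕ)) (X g) := by
    simp only [sub_apply, smul_sub, Finset.sum_sub_distrib]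
  rw [NNReal.coe_one, one_mul, dist_eq_norm, hsub, mul_assoc]
  refine norm_sum_sum_smul_le hM (fun g k => ?_) f
  calc ‖(T' ^ (k : ℕ) - T ^ (k : ℕ)) (X g)‖ ≤ k * ‖T' - T‖ * ‖X g‖ :=
        (T' ^ (k : ℕ) - T ^ (k : ℕ)).le_of_opNorm_le
          (ContinuousLinearMap.norm_pow_sub_pow_le hT' hT k) _
    _ ≤ K * ‖T' - T‖ * ‖X‖ := by
        gcongr
        · exact_mod_cast k.is_lt.le
        · exact norm_le_pi_norm X g

variable {h : Fin L → Fin F → Fin F → Fin K → ℝ}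

theorem lipschitzWith_opNetwork (hT : ‖T‖ ≤ 1) (hσ : LipschitzWith 1 σ)
    (hM : ∀ ℓ f g k, |h ℓ f g k| ≤ M) : LipschitzWith ((F * K * M) ^ L) (opNetwork T σ h) := by
  have := LipschitzWith.list_foldl (l := List.ofFn h) fun hl hl_mem => by
    obtain ⟨ℓ, rfl⟩ := List.mem_ofFn.1 hl_mem
    exact lipschitzWith_opLayer hT hσ (hM ℓ)
  rwa [List.length_ofFn] at this

theorem dist_opNetwork_opNetwork_le (hT : ‖T‖ ≤ 1) (hT' : ‖T'‖ ≤ 1) (hσ : LipschitzWith 1 σ)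
    (hσ0 : σ 0 = 0) (hM : ∀ ℓ f g k, |h ℓ f g k| ≤ M) (X Y : Fin F → E) :
    dist (opNetwork T' σ h Y) (opNetwork T σ h X)
      ≤ (F * K * M + 1) ^ L * (dist Y X + L * ((F * K * M + 1) * (K * ‖T' - T‖)) * ‖X‖) := by
  have hmem : ∀ hl ∈ List.ofFn h, ∀ f g k, |hl f g k| ≤ M := fun hl hl_mem => by
    obtain ⟨ℓ, rfl⟩ := List.mem_ofFn.1 hl_mem
    exact hM ℓ
  have hB : (F * K * M : ℝ≥0) ≤ F * K * M + 1 := le_add_of_nonneg_right zero_le_one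
  have := dist_list_foldl_le (l := List.ofFn h) (B := F * K * M + 1)
    (δ := (F * K * M + 1) * (K * ‖T' - T‖)) le_add_self (by positivity)
    (fun hl h_mem => (lipschitzWith_opLayer hT hσ (hmem hl h_mem)).weaken hB)
    (fun _ _ => opLayer_zero hσ0)
    (fun hl h_mem => (lipschitzWith_opLayer hT' hσ (hmem hl h_mem)).weaken hB)
    (fun hl h_mem X => (dist_opLayer_opLayer_le hT hT' hσ (hmem hl h_mem) X).trans (by
      gcongr
      exact le_add_of_nonneg_right zero_le_one)) X Y
  rwa [List.length_ofFn] at this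

end OperatorNetwork

section OperatorNetworkODE

variable {E : Type*} [NormedAddCommGroup E] [NormedSpace ℝ E] {F K L : ℕ}
  {T T' : E →L[ℝ] E} {σ : E → E} {M : ℝ≥0}

theorem dist_le_gronwallBound_of_opNetwork_ODE (hT : ‖T‖ ≤ 1) (hT' : ‖T'‖ ≤ 1)
    (hσ : LipschitzWith 1 σ) (hσ0 : σ 0 = 0) {H : ℝ → Fin L → Fin F → Fin F → Fin K → ℝ}
    {τ R δ ε : ℝ} (hH : ∀ t ∈ Ico 0 τ, ∀ ℓ f g k, |H t ℓ f g k| ≤ M) {x y : ℝ → Fin F → E}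
    (hx : ContinuousOn x (Icc 0 τ))
    (hx' : ∀ t ∈ Ico 0 τ, HasDerivWithinAt x (opNetwork T σ (H t) (x t)) (Ici t) t)
    (hxR : ∀ t ∈ Ico 0 τ, ‖x t‖ ≤ R) (hy : ContinuousOn y (Icc 0 τ))
    (hy' : ∀ t ∈ Ico 0 τ, HasDerivWithinAt y (opNetwork T' σ (H t) (y t)) (Ici t) t)
    (hδ : dist (x 0) (y 0) ≤ δ) (hε : ‖T' - T‖ ≤ ε) :
    ∀ t ∈ Icc 0 τ, dist (x t) (y t) ≤
      gronwallBound δ ((F * K * M : ℝ) ^ L) ((F * K * M + 1) ^ (L + 1) * L * K * ε * R) t := by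
  -- `x` is an approximate solution of the `T'`-equation, so only `x` needs to be bounded.
  have hx_approx : ∀ t ∈ Ico 0 τ, dist (opNetwork T σ (H t) (x t)) (opNetwork T' σ (H t) (x t))
      ≤ (F * K * M + 1) ^ (L + 1) * L * K * ε * R := fun t ht => by
    rw [dist_comm]
    refine (dist_opNetwork_opNetwork_le hT hT' hσ hσ0 (hH t ht) (x t) (x t)).trans ?_
    have hε0 : 0 ≤ ε := (norm_nonneg _).trans hε
    calc ((F * K * M + 1) ^ L * (dist (x t) (x t)
            + L * ((F * K * M + 1) * (K * ‖T' - T‖)) * ‖x t‖) : ℝ)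
        ≤ (F * K * M + 1) ^ L * (0 + L * ((F * K * M + 1) * (K * ε)) * R) := by
          rw [dist_self]; gcongr; exact hxR t ht
      _ = (F * K * M + 1) ^ (L + 1) * L * K * ε * R := by ring
  intro t ht
  simpa using dist_le_of_approx_trajectories_ODE_of_mem (v := fun t => opNetwork T' σ (H t))
    (s := fun _ => univ) (K := (F * K * M) ^ L) (εg := 0)
    (fun t ht => (lipschitzWith_opNetwork hT' hσ (hH t ht)).lipschitzOnWith) hx hx' hx_approx
    (fun _ _ => trivial) hy hy' (fun t _ => by simp) (fun _ _ => trivial) hδ t ht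

end OperatorNetworkODE

namespace MeasureTheory.Lp

variable {α E 𝕜 : Type*} [MeasurableSpace α] {μ : Measure α} [NormedAddCommGroup E]
  [IsProbabilityMeasure μ] [NontriviallyNormedField 𝕜] [NormedSpace 𝕜 E] {p q : ℝ≥0∞}
  [Fact (1 ≤ p)] [Fact (1 ≤ q)]

noncomputable def inclusionOfLE (hpq : p ≤ q) : Lp E q μ →L[𝕜] Lp E p μ :=
  LinearMap.mkContinuous
    { toFun f := ⟨f, Lp.antitone hpq f.2⟩
      map_add' _ _ := rfl
      map_smul' _ _ := rfl } 1 fun f => by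
    rw [one_mul]
    exact ENNReal.toReal_mono (Lp.eLpNorm_ne_top f)
      (eLpNorm_le_eLpNorm_of_exponent_le hpq (Lp.aestronglyMeasurable f))

theorem norm_inclusionOfLE_le (hpq : p ≤ q) : ‖(inclusionOfLE hpq : Lp E q μ →L[𝕜] Lp E p μ)‖ ≤ 1 :=
  LinearMap.mkContinuous_norm_le _ zero_le_one _

end MeasureTheory.Lp

instance : IsProbabilityMeasure μI :=
  ⟨by rw [μI, Measure.restrict_apply_univ, Real.volume_Icc]; norm_num⟩

section GraphonOperator

variable {W : ℝ → ℝ → ℝ}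

theorem graphonOp_congr_ae {x y : ℝ → ℝ} (h : x =ᵐ[μI] y) : graphonOp W x = graphonOp W y :=
  funext fun _ => integral_congr_ae (h.mono fun u hu => by simp only [hu])

theorem graphonOp_smul (c : ℝ) (x : ℝ → ℝ) : graphonOp W (c • x) = c • graphonOp W x := by
  funext v
  simp only [graphonOp, Pi.smul_apply, smul_eq_mul, ← integral_const_mul]
  congr 1; funext u; ring

theorem aestronglyMeasurable_graphonOp (hWm : Measurable (Function.uncurry W)) {x : ℝ → ℝ}
    (hx : AEStronglyMeasurable x μI) : AEStronglyMeasurable (graphonOp W x) μI := by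
  rw [graphonOp_congr_ae hx.ae_eq_mk]
  have hmeas : StronglyMeasurable fun p : ℝ × ℝ => W p.2 p.1 * hx.mk x p.2 :=
    ((hWm.comp measurable_swap).mul
      (hx.stronglyMeasurable_mk.measurable.comp measurable_snd)).stronglyMeasurable
  exact hmeas.integral_prod_right'.aestronglyMeasurable

theorem integrable_kernel_mul (hWm : Measurable (Function.uncurry W))
    (hWb : ∀ u v, |W u v| ≤ 1) {x : ℝ → ℝ} (hx : Integrable x μI) (v : ℝ) :
    Integrable (fun u => W u v * x u) μI :=
  hx.bdd_mul (c := 1) (hWm.comp (measurable_id.prodMk measurable_const)).aestronglyMeasurable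
    (ae_of_all _ fun u => hWb u v)

theorem graphonOp_add (hWm : Measurable (Function.uncurry W)) (hWb : ∀ u v, |W u v| ≤ 1)
    {x y : ℝ → ℝ} (hx : Integrable x μI) (hy : Integrable y μI) :
    graphonOp W (x + y) = graphonOp W x + graphonOp W y := by
  funext v
  simp only [graphonOp, Pi.add_apply, mul_add]
  exact integral_add (integrable_kernel_mul hWm hWb hx v) (integrable_kernel_mul hWm hWb hy v)

theorem abs_graphonOp_le (hWb : ∀ u v, |W u v| ≤ 1) (x : Lp ℝ 2 μI) (v : ℝ) :
    |graphonOp W x v| ≤ ‖x‖ := by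
  let ι : Lp ℝ 2 μI →L[ℝ] Lp ℝ 1 μI := Lp.inclusionOfLE one_le_two
  calc |graphonOp W x v| ≤ ∫ u, ‖ι x u‖ ∂μI := by
        show ‖∫ u, W u v * x u ∂μI‖ ≤ _
        refine norm_integral_le_of_norm_le (L1.integrable_coeFn (ι x)).norm
          (ae_of_all _ fun u => ?_)
        rw [norm_mul]
        exact mul_le_of_le_one_left (norm_nonneg _) (hWb u v)
    _ = ‖ι x‖ := (L1.norm_eq_integral_norm (ι x)).symm
    _ ≤ ‖x‖ := (ι.le_of_opNorm_le (Lp.norm_inclusionOfLE_le _) x).trans_eq (one_mul _)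

theorem memLp_graphonOp (hWm : Measurable (Function.uncurry W)) (hWb : ∀ u v, |W u v| ≤ 1)
    (x : Lp ℝ 2 μI) : MemLp (graphonOp W x) 2 μI :=
  (memLp_top_of_bound (aestronglyMeasurable_graphonOp hWm (Lp.aestronglyMeasurable x)) ‖x‖
    (ae_of_all _ (abs_graphonOp_le hWb x))).mono_exponent le_top

end GraphonOperator

section GraphonL2

variable {W W' : ℝ → ℝ → ℝ}

noncomputable def graphonL2 (hWm : Measurable (Function.uncurry W)) (hWb : ∀ u v, |W u v| ≤ 1) :
    Lp ℝ 2 μI →L[ℝ] Lp ℝ 2 μI :=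
  LinearMap.mkContinuous
    { toFun x := (memLp_graphonOp hWm hWb x).toLp _
      map_add' x y := by
        rw [← MemLp.toLp_add]
        refine MemLp.toLp_congr _ _ (EventuallyEq.of_eq ?_)
        rw [graphonOp_congr_ae (Lp.coeFn_add x y),
          graphonOp_add hWm hWb ((Lp.memLp x).integrable one_le_two)
          ((Lp.memLp y).integrable one_le_two)]
      map_smul' c x := by
        rw [RingHom.id_apply, ← MemLp.toLp_const_smul]
        exact MemLp.toLp_congr _ _ (EventuallyEq.of_eq (by
          rw [graphonOp_congr_ae (Lp.coeFn_smul c x), graphonOp_smul])) }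
    1 fun x => by
      rw [one_mul]
      refine (Lp.norm_le_of_ae_bound (norm_nonneg x) ?_).trans_eq (by simp [measureUnivNNReal])
      filter_upwards [MemLp.coeFn_toLp (memLp_graphonOp hWm hWb x)] with v hv
      exact (congrArg norm hv).trans_le (abs_graphonOp_le hWb x v)

variable {hWm : Measurable (Function.uncurry W)} {hWb : ∀ u v, |W u v| ≤ 1}
  {hW'm : Measurable (Function.uncurry W')} {hW'b : ∀ u v, |W' u v| ≤ 1}

theorem coeFn_graphonL2 (x : Lp ℝ 2 μI) : ⇑(graphonL2 hWm hWb x) =ᵐ[μI] graphonOp W x :=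
  MemLp.coeFn_toLp (memLp_graphonOp hWm hWb x)

theorem norm_graphonL2_le : ‖graphonL2 hWm hWb‖ ≤ 1 :=
  LinearMap.mkContinuous_norm_le _ zero_le_one _

theorem coeFn_graphonL2_pow {x : Lp ℝ 2 μI} {y : ℝ → ℝ} (hy : y =ᵐ[μI] x) (k : ℕ) :
    ⇑((graphonL2 hWm hWb ^ k) x) =ᵐ[μI] graphonIter W k y := by
  induction k with
  | zero => exact hy.symm
  | succ k ih =>
    rw [pow_succ', mul_apply_eq_comp, graphonIter,
      Function.iterate_succ_apply', ← graphonIter, ← graphonOp_congr_ae ih]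
    exact coeFn_graphonL2 _

theorem toReal_eLpNorm_graphonOp_sub (hWm : Measurable (Function.uncurry W))
    (hWb : ∀ u v, |W u v| ≤ 1) (hW'm : Measurable (Function.uncurry W'))
    (hW'b : ∀ u v, |W' u v| ≤ 1) {z : ℝ → ℝ} (hz : MemLp z 2 μI) :
    (eLpNorm (fun v => graphonOp W' z v - graphonOp W z v) 2 μI).toReal
      = ‖(graphonL2 hW'm hW'b - graphonL2 hWm hWb) (hz.toLp z)‖ := by
  rw [sub_apply, Lp.norm_def, eLpNorm_congr_ae (Lp.coeFn_sub _ _),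
    eLpNorm_congr_ae ((coeFn_graphonL2 _).sub (coeFn_graphonL2 _)),
    graphonOp_congr_ae (W := W') (MemLp.coeFn_toLp hz), graphonOp_congr_ae (MemLp.coeFn_toLp hz)]
  rfl

theorem graphonOpNormSub_nonneg (W W' : ℝ → ℝ → ℝ) : 0 ≤ graphonOpNormSub W W' :=
  Real.iSup_nonneg fun _ => ENNReal.toReal_nonneg

theorem norm_graphonL2_sub_le :
    ‖graphonL2 hW'm hW'b - graphonL2 hWm hWb‖ ≤ graphonOpNormSub W' W := by
  have hbdd : BddAbove (range fun z : {z : ℝ → ℝ // MemLp z 2 μI ∧ eLpNorm z 2 μI ≤ 1} =>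
      (eLpNorm (fun v => graphonOp W' z.1 v - graphonOp W z.1 v) 2 μI).toReal) := by
    refine ⟨‖graphonL2 hW'm hW'b - graphonL2 hWm hWb‖, forall_mem_range.2 fun z => ?_⟩
    rw [toReal_eLpNorm_graphonOp_sub hWm hWb hW'm hW'b z.2.1]
    refine (ContinuousLinearMap.le_opNorm_of_le _ ?_).trans_eq (mul_one _)
    rw [Lp.norm_toLp]
    exact ENNReal.toReal_le_of_le_ofReal zero_le_one (z.2.2.trans ENNReal.ofReal_one.ge)
  refine ContinuousLinearMap.opNorm_le_of_unit_norm (graphonOpNormSub_nonneg W' W) fun x hx => ?_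
  have hx1 : eLpNorm x 2 μI ≤ 1 := by
    rw [← ENNReal.toReal_le_toReal (Lp.eLpNorm_ne_top x) ENNReal.one_ne_top, ← Lp.norm_def, hx,
      ENNReal.toReal_one]
  calc ‖(graphonL2 hW'm hW'b - graphonL2 hWm hWb) x‖
      = (eLpNorm (fun v => graphonOp W' x v - graphonOp W x v) 2 μI).toReal := by
        rw [toReal_eLpNorm_graphonOp_sub hWm hWb hW'm hW'b (Lp.memLp x), Lp.toLp_coeFn]
    _ ≤ graphonOpNormSub W' W := le_ciSup hbdd ⟨x, Lp.memLp x, hx1⟩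

end GraphonL2

theorem NormalizedLipschitz.lipschitzWith {ρ : ℝ → ℝ} (hρ : NormalizedLipschitz ρ) :
    LipschitzWith 1 ρ :=
  LipschitzWith.of_dist_le_mul fun a b => by simpa [Real.dist_eq] using hρ.1 a b

noncomputable def activationL2 {ρ : ℝ → ℝ} (hρ : NormalizedLipschitz ρ) :
    Lp ℝ 2 μI → Lp ℝ 2 μI :=
  hρ.lipschitzWith.compLp hρ.2

theorem lipschitzWith_activationL2 {ρ : ℝ → ℝ} (hρ : NormalizedLipschitz ρ) :
    LipschitzWith 1 (activationL2 hρ) :=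
  hρ.lipschitzWith.lipschitzWith_compLp hρ.2

theorem activationL2_zero {ρ : ℝ → ℝ} (hρ : NormalizedLipschitz ρ) : activationL2 hρ 0 = 0 :=
  hρ.lipschitzWith.compLp_zero hρ.2

section GraphonNetwork

variable {F K L : ℕ} {W : ℝ → ℝ → ℝ} {ρ : ℝ → ℝ}
  (hWm : Measurable (Function.uncurry W)) (hWb : ∀ u v, |W u v| ≤ 1) (hρ : NormalizedLipschitz ρ)

theorem gnnLayer_ae_eq_opLayer (h : Fin F → Fin F → Fin K → ℝ) {Y : Fin F → ℝ → ℝ}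
    {X : Fin F → Lp ℝ 2 μI} (hY : ∀ g, Y g =ᵐ[μI] ⇑(X g)) (f : Fin F) :
    gnnLayer F K W ρ h Y f =ᵐ[μI] ⇑(opLayer (graphonL2 hWm hWb) (activationL2 hρ) h X f) := by
  set T := graphonL2 hWm hWb
  set v : Fin F → Fin K → Lp ℝ 2 μI := fun g k => h f g k • (T ^ (k : ℕ)) (X g)
  have hpow : ∀ᵐ u ∂μI, ∀ g (k : Fin K),
      ((T ^ (k : ℕ)) (X g) : ℝ → ℝ) u = graphonIter W k (Y g) u :=
    ae_all_iff.2 fun g => ae_all_iff.2 fun k => coeFn_graphonL2_pow (hY g) k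
  filter_upwards [LipschitzWith.coeFn_compLp hρ.lipschitzWith hρ.2 (∑ g, ∑ k, v g k),
    Lp.coeFn_finsetSum Finset.univ fun g => ∑ k, v g k,
    ae_all_iff.2 fun g => Lp.coeFn_finsetSum Finset.univ (v g),
    ae_all_iff.2 fun g => ae_all_iff.2 fun k => Lp.coeFn_smul (h f g k) ((T ^ (k : ℕ)) (X g)),
    hpow] with u hρu hsum hsum' hsmul hpowu
  simp only [opLayer, activationL2, hρu, Function.comp_apply, hsum, Finset.sum_apply, hsum', v,
    hsmul, Pi.smul_apply, smul_eq_mul, hpowu, gnnLayer]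

theorem gnn_ae_eq_opNetwork (h : Fin L → Fin F → Fin F → Fin K → ℝ) {Y : Fin F → ℝ → ℝ}
    {X : Fin F → Lp ℝ 2 μI} (hY : ∀ g, Y g =ᵐ[μI] ⇑(X g)) (f : Fin F) :
    gnn F K L W ρ h Y f =ᵐ[μI] ⇑(opNetwork (graphonL2 hWm hWb) (activationL2 hρ) h X f) := by
  suffices ∀ (l : List (Fin F → Fin F → Fin K → ℝ)) (X : Fin F → Lp ℝ 2 μI) (Y : Fin F → ℝ → ℝ),
      (∀ g, Y g =ᵐ[μI] ⇑(X g)) → ∀ f, l.foldl (fun Z hl => gnnLayer F K W ρ hl Z) Y f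
        =ᵐ[μI] ⇑(l.foldl (fun Z hl => opLayer (graphonL2 hWm hWb) (activationL2 hρ) hl Z) X f) from
    this _ X Y hY f
  intro l
  induction l with
  | nil => exact fun _ _ hY => hY
  | cons hl l ih => exact fun _ _ hY => ih _ _ (gnnLayer_ae_eq_opLayer hWm hWb hρ hl hY)

end GraphonNetwork

noncomputable def vecToL2 (F : ℕ) : (Fin F → Lp ℝ ⊤ μI) →L[ℝ] (Fin F → Lp ℝ 2 μI) :=
  ContinuousLinearMap.piMap fun _ => Lp.inclusionOfLE le_top

section VecLpNorm

variable {F : ℕ} {p : ℝ≥0∞}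

theorem vecLpNorm_congr_ae {X Y : Fin F → ℝ → ℝ} (h : ∀ f, X f =ᵐ[μI] Y f) :
    vecLpNorm F p X = vecLpNorm F p Y := by
  simp only [vecLpNorm, eLpNorm_congr_ae (h _)]

theorem vecLpNorm_coeFn_sub (A B : Fin F → Lp ℝ p μI) :
    vecLpNorm F p (fun f u => A f u - B f u) = vecLpNorm F p fun f => (A - B) f :=
  vecLpNorm_congr_ae fun f => (Lp.coeFn_sub (A f) (B f)).symm

variable [Fact (1 ≤ p)]

theorem norm_le_vecLpNorm (Y : Fin F → Lp ℝ p μI) : ‖Y‖ ≤ vecLpNorm F p fun f => Y f := by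
  refine (pi_norm_le_iff_of_nonneg (Real.sqrt_nonneg _)).2 fun f => Real.le_sqrt_of_sq_le ?_
  rw [Lp.norm_def]
  exact Finset.single_le_sum (f := fun f => (eLpNorm (Y f) p μI).toReal ^ 2)
    (fun _ _ => sq_nonneg _) (Finset.mem_univ f)

theorem vecLpNorm_le_sqrt_mul_norm (Y : Fin F → Lp ℝ p μI) :
    vecLpNorm F p (fun f => Y f) ≤ √F * ‖Y‖ := by
  rw [← Real.sqrt_sq (norm_nonneg Y), ← Real.sqrt_mul (Nat.cast_nonneg F)]
  refine Real.sqrt_le_sqrt ?_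
  calc ∑ f, (eLpNorm (Y f) p μI).toReal ^ 2 ≤ ∑ _f : Fin F, ‖Y‖ ^ 2 := by
        gcongr with f
        rw [← Lp.norm_def]
        exact norm_le_pi_norm Y f
    _ = F * ‖Y‖ ^ 2 := by simp

theorem dist_le_vecLpNorm_sub (A B : Fin F → Lp ℝ p μI) :
    dist A B ≤ vecLpNorm F p (fun f u => A f u - B f u) := by
  rw [vecLpNorm_coeFn_sub, dist_eq_norm]; exact norm_le_vecLpNorm _

theorem vecLpNorm_sub_le (A B : Fin F → Lp ℝ p μI) :
    vecLpNorm F p (fun f u => A f u - B f u) ≤ √F * dist A B := by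
  rw [vecLpNorm_coeFn_sub, dist_eq_norm]; exact vecLpNorm_le_sqrt_mul_norm _

end VecLpNorm

namespace IsGNDESolution

variable {F K L : ℕ} {T : ℝ} {W : ℝ → ℝ → ℝ} {ρ : ℝ → ℝ}
  {H : ℝ → Fin L → Fin F → Fin F → Fin K → ℝ} {Z : Fin F → ℝ → ℝ} {X : ℝ → Fin F → Lp ℝ ⊤ μI}

theorem coeFn_vecToL2_zero (hX : IsGNDESolution F K L T W ρ H Z X) (f : Fin F) :
    ⇑(vecToL2 F (X 0) f) =ᵐ[μI] Z f :=
  hX.1 f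

theorem continuousOn_vecToL2 (hX : IsGNDESolution F K L T W ρ H Z X) :
    ContinuousOn (fun t => vecToL2 F (X t)) (Icc 0 T) := by
  obtain ⟨-, X', -, hX'⟩ := hX
  exact (vecToL2 F).continuous.comp_continuousOn fun t ht => (hX' t ht).1.continuousWithinAt

theorem hasDerivWithinAt_vecToL2 (hX : IsGNDESolution F K L T W ρ H Z X)
    (hWm : Measurable (Function.uncurry W)) (hWb : ∀ u v, |W u v| ≤ 1)
    (hρ : NormalizedLipschitz ρ) :
    ∀ t ∈ Ico 0 T, HasDerivWithinAt (fun s => vecToL2 F (X s))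
      (opNetwork (graphonL2 hWm hWb) (activationL2 hρ) (H t) (vecToL2 F (X t))) (Ici t) t := by
  obtain ⟨-, X', -, hX'⟩ := hX
  intro t ht
  have hderiv := ((vecToL2 F).hasFDerivAt.comp_hasDerivWithinAt t
    (hX' t (Ico_subset_Icc_self ht)).1).mono_of_mem_nhdsWithin (Icc_mem_nhdsGE_of_mem ht)
  have hfield : opNetwork (graphonL2 hWm hWb) (activationL2 hρ) (H t) (vecToL2 F (X t))
      = vecToL2 F (X' t) := funext fun f =>
    Lp.ext ((gnn_ae_eq_opNetwork hWm hWb hρ (H t) (fun _ => EventuallyEq.rfl) f).symm.trans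
      ((hX' t (Ico_subset_Icc_self ht)).2 f).symm)
  rw [hfield]
  exact hderiv

theorem vecLpNorm_sub_le_gronwallBound {W' : ℝ → ℝ → ℝ} {Z' : Fin F → ℝ → ℝ}
    {X' : ℝ → Fin F → Lp ℝ ⊤ μI} {M : ℝ≥0} {R : ℝ} (hX : IsGNDESolution F K L T W ρ H Z X)
    (hX' : IsGNDESolution F K L T W' ρ H Z' X') (hWm : Measurable (Function.uncurry W))
    (hWb : ∀ u v, |W u v| ≤ 1) (hW'm : Measurable (Function.uncurry W'))
    (hW'b : ∀ u v, |W' u v| ≤ 1) (hρ : NormalizedLipschitz ρ)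
    (hM : ∀ t ∈ Icc 0 T, ∀ ℓ f g k, |H t ℓ f g k| ≤ M)
    (hR : ∀ t ∈ Icc 0 T, ‖vecToL2 F (X t)‖ ≤ R) :
    ∀ t ∈ Icc 0 T, vecLpNorm F 2 (fun f u => (X' t f : ℝ → ℝ) u - (X t f : ℝ → ℝ) u)
      ≤ √F * gronwallBound (vecLpNorm F 2 fun f u => Z' f u - Z f u) ((F * K * M : ℝ) ^ L)
        ((F * K * M + 1) ^ (L + 1) * L * K * graphonOpNormSub W' W * R) T := by
  intro t ht
  have hR0 : 0 ≤ R := (norm_nonneg _).trans (hR 0 ⟨le_rfl, ht.1.trans ht.2⟩)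
  have hinit : dist (vecToL2 F (X 0)) (vecToL2 F (X' 0))
      ≤ vecLpNorm F 2 fun f u => Z' f u - Z f u := by
    rw [dist_comm]
    exact (dist_le_vecLpNorm_sub _ _).trans_eq (vecLpNorm_congr_ae fun f =>
      (hX'.coeFn_vecToL2_zero f).sub (hX.coeFn_vecToL2_zero f))
  have hgron := dist_le_gronwallBound_of_opNetwork_ODE norm_graphonL2_le norm_graphonL2_le
    (lipschitzWith_activationL2 hρ) (activationL2_zero hρ)
    (fun s hs => hM s (Ico_subset_Icc_self hs)) hX.continuousOn_vecToL2
    (hX.hasDerivWithinAt_vecToL2 hWm hWb hρ) (fun s hs => hR s (Ico_subset_Icc_self hs))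
    hX'.continuousOn_vecToL2 (hX'.hasDerivWithinAt_vecToL2 hW'm hW'b hρ) hinit
    norm_graphonL2_sub_le t ht
  calc _ ≤ √F * dist (vecToL2 F (X' t)) (vecToL2 F (X t)) := vecLpNorm_sub_le _ _
    _ ≤ _ := by
      rw [dist_comm]
      have := graphonOpNormSub_nonneg W' W
      gcongr
      exact hgron.trans
        (gronwallBound_mono (Real.sqrt_nonneg _) (by positivity) (by positivity) ht.2)

end IsGNDESolution

theorem graphonNDE_trajectory_convergence_general
    (F K L : ℕ)
    (ρ : ℝ → ℝ) (hρ : NormalizedLipschitz ρ)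
    (T : ℝ) (hT : 0 < T)
    (H : ℝ → Fin L → Fin F → Fin F → Fin K → ℝ)
    (hH : ∀ ℓ f g k, ContinuousOn (fun t => H t ℓ f g k) (Set.Icc 0 T))
    (W : ℝ → ℝ → ℝ) (hWm : Measurable (Function.uncurry W))
    (hWb : ∀ u v, |W u v| ≤ 1)
    (Z : Fin F → ℝ → ℝ)
    (X : ℝ → Fin F → Lp ℝ ⊤ μI) (hX : IsGNDESolution F K L T W ρ H Z X)
    (Wn : ℕ → ℝ → ℝ → ℝ) (hWnm : ∀ n, Measurable (Function.uncurry (Wn n)))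
    (hWnb : ∀ n u v, |Wn n u v| ≤ 1)
    (Zn : ℕ → Fin F → ℝ → ℝ)
    (Xn : ℕ → ℝ → Fin F → Lp ℝ ⊤ μI)
    (hXn : ∀ n, IsGNDESolution F K L T (Wn n) ρ H (Zn n) (Xn n))
    (hWconv : Filter.Tendsto (fun n => graphonOpNormSub (Wn n) W) Filter.atTop (nhds 0))
    (hZconv : Filter.Tendsto (fun n => vecLpNorm F 2 (fun f u => Zn n f u - Z f u))
      Filter.atTop (nhds 0)) :
    Filter.Tendsto
      (fun n => ⨆ t : Set.Icc (0:ℝ) T,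
        vecLpNorm F 2 (fun f u => (Xn n (t : ℝ) f : ℝ → ℝ) u - (X (t : ℝ) f : ℝ → ℝ) u))
      Filter.atTop (nhds 0) := by
  obtain ⟨M, hM⟩ := exists_abs_coeff_le isCompact_Icc hH
  obtain ⟨R, hR⟩ := isCompact_Icc.exists_bound_of_continuousOn hX.continuousOn_vecToL2
  have : Nonempty (Icc (0 : ℝ) T) := ⟨⟨0, left_mem_Icc.2 hT.le⟩⟩
  have hε : Tendsto (fun n => (F * K * M + 1) ^ (L + 1) * L * K * graphonOpNormSub (Wn n) W * R)
      atTop (nhds 0) := by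
    simpa using (hWconv.const_mul ((F * K * M + 1) ^ (L + 1) * L * K : ℝ)).mul_const R
  refine squeeze_zero (fun n => Real.iSup_nonneg fun _ => Real.sqrt_nonneg _)
    (fun n => ciSup_le fun t => hX.vecLpNorm_sub_le_gronwallBound (hXn n) hWm hWb (hWnm n)
      (hWnb n) hρ hM hR t t.2) ?_
  simpa using (tendsto_gronwallBound_zero hZconv hε _ T).const_mul √F

/-- **Trajectory-wise convergence.**
If `‖T_{Wₙ} − T_W‖_{L²→L²} → 0` and `‖Zₙ − Z‖_{L²(I;ℝ^F)} → 0`, then the solutions `Xₙ` of the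
Graphon-NDEs with data `(Wₙ, Zₙ)` converge to the solution `X` with data `(W, Z)` uniformly in
time: `sup_{t∈[0,T]} ‖Xₙ(t) − X(t)‖_{L²(I;ℝ^F)} → 0`. -/
theorem graphonNDE_trajectory_convergence
    (F K L : ℕ) (hF : 1 ≤ F) (hK : 1 ≤ K) (hL : 1 ≤ L)
    (ρ : ℝ → ℝ) (hρ : NormalizedLipschitz ρ)
    (T : ℝ) (hT : 0 < T)
    (H : ℝ → Fin L → Fin F → Fin F → Fin K → ℝ)
    (hH : ∀ ℓ f g k, ContinuousOn (fun t => H t ℓ f g k) (Set.Icc 0 T))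
    (W : ℝ → ℝ → ℝ) (hWm : Measurable (Function.uncurry W))
    (hWb : ∀ u v, |W u v| ≤ 1)
    (Z : Fin F → ℝ → ℝ) (hZ : ∀ f, MemLp (Z f) ⊤ μI)
    (X : ℝ → Fin F → Lp ℝ ⊤ μI) (hX : IsGNDESolution F K L T W ρ H Z X)
    (Wn : ℕ → ℝ → ℝ → ℝ) (hWnm : ∀ n, Measurable (Function.uncurry (Wn n)))
    (hWnb : ∀ n u v, |Wn n u v| ≤ 1)
    (Zn : ℕ → Fin F → ℝ → ℝ) (hZn : ∀ n f, MemLp (Zn n f) ⊤ μI)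
    (Xn : ℕ → ℝ → Fin F → Lp ℝ ⊤ μI)
    (hXn : ∀ n, IsGNDESolution F K L T (Wn n) ρ H (Zn n) (Xn n))
    (hWconv : Filter.Tendsto (fun n => graphonOpNormSub (Wn n) W) Filter.atTop (nhds 0))
    (hZconv : Filter.Tendsto (fun n => vecLpNorm F 2 (fun f u => Zn n f u - Z f u))
      Filter.atTop (nhds 0)) :
    Filter.Tendsto
      (fun n => ⨆ t : Set.Icc (0:ℝ) T,
        vecLpNorm F 2 (fun f u => (Xn n (t : ℝ) f : ℝ → ℝ) u - (X (t : ℝ) f : ℝ → ℝ) u))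
      Filter.atTop (nhds 0) :=
  graphonNDE_trajectory_convergence_general F K L ρ hρ T hT H hH W hWm hWb Z X hX Wn hWnm hWnb Zn Xn
    hXn hWconv hZconv
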